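/- For every integer r ≥ 2, the following identity holds in ℋ: ⧈(a b^{r−1}) = Σ_{w ∈ W_r} c(w) · w, where W_r is the set of words of length r and the integers c(w) are: c(a^r) = r; c(a^{r−1}b) = r; and c(w) = j(w) for every other word w of length r, where j(w) is the number of letters a at the beginning of w (i.e. w = a^{j(w)} u with u not starting with a). -/

import Mathlib

inductive Letter | a | b
deriving DecidableEq

abbrev Word := List Letter

/-- The algebra `ℋ`: formal `ℚ`-linear combinations of words. -/
abbrev H := Word →₀ ℚ

/-- The list of shuffles of two words (with multiplicity). -/
def shuffleList : Word → Word → List Word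
  | [], v => [v]
  | u, [] => [u]
  | x :: u, y :: v =>
      ((shuffleList u (y :: v)).map fun t => x :: t) ++
      ((shuffleList (x :: u) v).map fun t => y :: t)
termination_by u v => u.length + v.length
decreasing_by all_goals simp

/-- The shuffle product `u * v` of two words, as an element of `ℋ`. -/
noncomputable def shW (u v : Word) : H :=
  ((shuffleList u v).map fun t => Finsupp.single t (1 : ℚ)).sum

/-- The shuffle product of a word with an element of `ℋ`, extended linearly. -/
noncomputable def shWH (u : Word) (g : H) : H := g.sum fun v cv => cv • shW u v

/-- Concatenation of a word with an element of `ℋ`, extended linearly. -/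
noncomputable def concatWH (u : Word) (g : H) : H :=
  g.sum fun v c => Finsupp.single (u ++ v) c

/-- The list of all words of length `m`. -/
def wordsOfLength : ℕ → List Word
  | 0 => [[]]
  | n + 1 =>
      ((wordsOfLength n).map fun t => Letter.a :: t) ++
      ((wordsOfLength n).map fun t => Letter.b :: t)

/-- `(a+b)^m`, the `m`-fold concatenation power of `a+b` expanded multilinearly:
the sum of all words of length `m`. -/
noncomputable def abPow (m : ℕ) : H :=
  ((wordsOfLength m).map fun t => Finsupp.single t (1 : ℚ)).sum

/-- `(b-a)^m`, the `m`-fold concatenation power of `b-a` expanded multilinearly: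
the signed sum of all words of length `m`. -/
noncomputable def bmaPow (m : ℕ) : H :=
  ((wordsOfLength m).map fun t =>
    Finsupp.single t ((-1 : ℚ) ^ t.count Letter.a)).sum

def sigmaL : Letter → Letter
  | .a => .b
  | .b => .a

/-- `σ(c₁⋯c_n) = σ(c_n)⋯σ(c₁)` with `σ(a)=b`, `σ(b)=a`. -/
def sigmaW (w : Word) : Word := (w.map sigmaL).reverse

/-- The operator `⧈` : `⧈(c₁⋯c_n) = Σ_{i=0}^{n} (c₁⋯c_i) * σ(c_{i+1}⋯c_n)`. -/
noncomputable def box (w : Word) : H :=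
  ∑ i ∈ Finset.range (w.length + 1), shW (w.take i) (sigmaW (w.drop i))

def isA : Letter → Bool
  | .a => true
  | .b => false

/-- `j(w)`: the number of letters `a` at the beginning of `w`. -/
def jW (w : Word) : ℕ := (w.takeWhile isA).length

/-- The coefficient `c(w)` for a word of length `r`. -/
def ccoef (r : ℕ) (w : Word) : ℕ :=
  if w = List.replicate r Letter.a then r
  else if w = List.replicate (r - 1) Letter.a ++ [Letter.b] then r
  else jW w

/-! For `i ≥ 1` the `i`-th term of `⧈(a bⁿ)` is `a bⁱ⁻¹ * aⁿ⁻ⁱ⁺¹`, and the term `i = 0` is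
`σ(a bⁿ) = aⁿ b`. Splitting a shuffle according to its first letter shows that
`Bₙ = Σ_{i+j=n} bⁱ * aʲ` obeys the recursion `Bₙ₊₁ = a Bₙ + b Bₙ` of `(a+b)ⁿ`, and then that
`Tₙ = Σ_{i+j=n} a bⁱ * aʲ` obeys `Tₙ₊₁ = a (a+b)ⁿ⁺¹ + a Tₙ`, which is also the recursion of
`Jₙ = Σ_{|w|=n+1} j(w) w` since `j(a w) = j(w) + 1` and `j(b w) = 0`. Hence
`⧈(a bⁿ) = aⁿ b + Σ_{|w|=n+1} j(w) w`, and `c(w) = j(w) + [w = aⁿ b]` for `|w| = n + 1`. -/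

section

open Finset Finsupp

lemma mapDomain_cons_apply_cons (x y : Letter) (f : H) (w : Word) :
    mapDomain (x :: ·) f (y :: w) = if x = y then f w else 0 := by
  split_ifs with h
  · subst h
    exact mapDomain_apply List.cons_injective f w
  · exact mapDomain_of_notMem_range _ _ (by simpa using h)

lemma mapDomain_cons_apply_nil (x : Letter) (f : H) : mapDomain (x :: ·) f [] = 0 :=
  mapDomain_of_notMem_range _ _ (by simp)

lemma mapDomain_cons_list_sum_single (x : Letter) (L : List Word) (c : Word → ℚ) :
    mapDomain (x :: ·) (L.map fun t => single t (c t)).sum =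
      (L.map fun t => single (x :: t) (c t)).sum := by
  induction L with
  | nil => simp
  | cons h t ih => simp [mapDomain_add, mapDomain_single, ih]

lemma shW_nil_left (v : Word) : shW [] v = single v 1 := by
  simp [shW, shuffleList]

lemma shW_nil_right (u : Word) : shW u [] = single u 1 := by
  cases u <;> simp [shW, shuffleList]

lemma shW_cons_cons (x y : Letter) (u v : Word) :
    shW (x :: u) (y :: v) =
      mapDomain (x :: ·) (shW u (y :: v)) + mapDomain (y :: ·) (shW (x :: u) v) := by
  simp only [shW, shuffleList, List.map_append, List.map_map, List.sum_append,
    mapDomain_cons_list_sum_single (c := fun _ => (1 : ℚ))]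
  rfl

noncomputable def wordSum (n : ℕ) (c : Word → ℚ) : H :=
  ((wordsOfLength n).map fun w => single w (c w)).sum

lemma wordSum_succ (n : ℕ) (c : Word → ℚ) :
    wordSum (n + 1) c =
      mapDomain (Letter.a :: ·) (wordSum n fun w => c (Letter.a :: w)) +
      mapDomain (Letter.b :: ·) (wordSum n fun w => c (Letter.b :: w)) := by
  simp only [wordSum, wordsOfLength, List.map_append, List.map_map, List.sum_append,
    mapDomain_cons_list_sum_single]
  rfl

lemma wordSum_apply (n : ℕ) (c : Word → ℚ) (w : Word) :
    wordSum n c w = if w.length = n then c w else 0 := by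
  induction n generalizing c w with
  | zero => cases w <;> simp [wordSum, wordsOfLength]
  | succ n ih =>
    rcases w with _ | ⟨x, w⟩
    · simp [wordSum_succ, mapDomain_cons_apply_nil]
    · cases x <;> simp [wordSum_succ, mapDomain_cons_apply_cons, ih]

lemma abPow_eq_wordSum (n : ℕ) : abPow n = wordSum n 1 := rfl

lemma abPow_succ (n : ℕ) :
    abPow (n + 1) = mapDomain (Letter.a :: ·) (abPow n) + mapDomain (Letter.b :: ·) (abPow n) :=
  wordSum_succ n 1

lemma jW_cons_a (w : Word) : jW (Letter.a :: w) = jW w + 1 := by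
  simp [jW, List.takeWhile_cons, isA]

lemma jW_cons_b (w : Word) : jW (Letter.b :: w) = 0 := by
  simp [jW, isA]

lemma wordSum_jW_succ (n : ℕ) :
    wordSum (n + 1) (jW ·) =
      mapDomain (Letter.a :: ·) (abPow n) + mapDomain (Letter.a :: ·) (wordSum n (jW ·)) := by
  have hb : (wordSum n fun w => (jW (Letter.b :: w) : ℚ)) = 0 := by
    ext w; simp [wordSum_apply, jW_cons_b]
  have ha : (wordSum n fun w => (jW (Letter.a :: w) : ℚ)) = abPow n + wordSum n (jW ·) := by
    ext w
    simp only [abPow_eq_wordSum, Finsupp.add_apply, wordSum_apply, jW_cons_a]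
    split_ifs <;> simp [add_comm]
  rw [wordSum_succ, hb, ha, mapDomain_add, mapDomain_zero, add_zero]

lemma sum_antidiagonal_succ_of_pascal (f : ℕ × ℕ → H)
    (h_left : ∀ j, f (0, j + 1) = mapDomain (Letter.a :: ·) (f (0, j)))
    (h_right : ∀ i, f (i + 1, 0) = mapDomain (Letter.b :: ·) (f (i, 0)))
    (h_inner : ∀ i j, f (i + 1, j + 1) =
      mapDomain (Letter.b :: ·) (f (i, j + 1)) + mapDomain (Letter.a :: ·) (f (i + 1, j)))
    (n : ℕ) :
    ∑ p ∈ antidiagonal (n + 1), f p =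
      mapDomain (Letter.a :: ·) (∑ p ∈ antidiagonal n, f p) +
      mapDomain (Letter.b :: ·) (∑ p ∈ antidiagonal n, f p) := by
  cases n with
  | zero =>
    simp only [Nat.sum_antidiagonal_succ, Nat.antidiagonal_zero, sum_singleton, h_left, h_right]
  | succ m =>
    have h_first := Nat.sum_antidiagonal_succ (f := f) (n := m)
    have h_last := Nat.sum_antidiagonal_succ' (f := f) (n := m)
    rw [Nat.sum_antidiagonal_succ, Nat.sum_antidiagonal_succ']
    nth_rw 1 [h_first]
    rw [h_last]
    simp only [h_left, h_right, h_inner, mapDomain_add, mapDomain_finsetSum, sum_add_distrib]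
    abel

lemma sum_antidiagonal_shW_replicate (n : ℕ) :
    ∑ p ∈ antidiagonal n, shW (List.replicate p.1 Letter.b) (List.replicate p.2 Letter.a) =
      abPow n := by
  induction n with
  | zero => simp [shW_nil_left, abPow, wordsOfLength]
  | succ n ih =>
    rw [sum_antidiagonal_succ_of_pascal _
      (by simp [shW_nil_left, mapDomain_single, List.replicate_succ])
      (by simp [shW_nil_right, mapDomain_single, List.replicate_succ])
      (fun _ _ => shW_cons_cons _ _ _ _), ih, abPow_succ]

lemma sum_antidiagonal_shW_cons_replicate (n : ℕ) :
    ∑ p ∈ antidiagonal n,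
        shW (Letter.a :: List.replicate p.1 Letter.b) (List.replicate p.2 Letter.a) =
      wordSum (n + 1) (jW ·) := by
  induction n with
  | zero =>
    rw [wordSum_jW_succ]
    simp [shW_nil_right, abPow, wordsOfLength, wordSum, mapDomain_single, jW]
  | succ n ih =>
    have h_last : shW (Letter.a :: List.replicate (n + 1) Letter.b) (List.replicate 0 Letter.a) =
        mapDomain (Letter.a :: ·)
          (shW (List.replicate (n + 1) Letter.b) (List.replicate 0 Letter.a)) := by
      simp [shW_nil_right, mapDomain_single]
    have h_step (p : ℕ × ℕ) :
        shW (Letter.a :: List.replicate p.1 Letter.b) (List.replicate (p.2 + 1) Letter.a) =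
          mapDomain (Letter.a :: ·)
            (shW (List.replicate p.1 Letter.b) (List.replicate (p.2 + 1) Letter.a)) +
          mapDomain (Letter.a :: ·)
            (shW (Letter.a :: List.replicate p.1 Letter.b) (List.replicate p.2 Letter.a)) := by
      rw [List.replicate_succ, shW_cons_cons]
    rw [Nat.sum_antidiagonal_succ', h_last, wordSum_jW_succ, ← ih,
      ← sum_antidiagonal_shW_replicate, Nat.sum_antidiagonal_succ']
    simp only [h_step, sum_add_distrib, mapDomain_add, mapDomain_finsetSum]
    abel

lemma jW_replicate_a (n : ℕ) : jW (List.replicate n Letter.a) = n := by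
  induction n with
  | zero => rfl
  | succ n ih => rw [List.replicate_succ, jW_cons_a, ih]

lemma jW_replicate_append_b (n : ℕ) : jW (List.replicate n Letter.a ++ [Letter.b]) = n := by
  induction n with
  | zero => exact jW_cons_b []
  | succ n ih => rw [List.replicate_succ, List.cons_append, jW_cons_a, ih]

lemma sigmaW_cons (x : Letter) (w : Word) : sigmaW (x :: w) = sigmaW w ++ [sigmaL x] := by
  simp [sigmaW]

lemma sigmaW_replicate (n : ℕ) (x : Letter) :
    sigmaW (List.replicate n x) = List.replicate n (sigmaL x) := by
  simp [sigmaW, List.map_replicate]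

lemma box_cons_replicate (n : ℕ) :
    box (Letter.a :: List.replicate n Letter.b) =
      single (List.replicate n Letter.a ++ [Letter.b]) 1 +
      ∑ p ∈ antidiagonal n,
        shW (Letter.a :: List.replicate p.1 Letter.b) (List.replicate p.2 Letter.a) := by
  rw [_root_.box, List.length_cons, List.length_replicate, sum_range_succ', add_comm,
    Nat.sum_antidiagonal_eq_sum_range_succ_mk]
  congr 1
  · simp [shW_nil_left, sigmaW_cons, sigmaW_replicate, sigmaL]
  · refine sum_congr rfl fun i hi => ?_
    have hi : i ≤ n := Nat.lt_succ_iff.mp (mem_range.mp hi)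
    simp [sigmaW_replicate, sigmaL, hi]

lemma ccoef_succ (n : ℕ) (w : Word) :
    ccoef (n + 1) w = jW w + if w = List.replicate n Letter.a ++ [Letter.b] then 1 else 0 := by
  have h_ne : List.replicate (n + 1) Letter.a ≠ List.replicate n Letter.a ++ [Letter.b] := by
    intro h
    simpa using congrArg (Letter.b ∈ ·) h
  simp only [ccoef, Nat.add_sub_cancel]
  split_ifs <;> subst_vars <;> simp_all [jW_replicate_a, jW_replicate_append_b]

lemma wordSum_ccoef_succ (n : ℕ) :
    wordSum (n + 1) (ccoef (n + 1) ·) =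
      single (List.replicate n Letter.a ++ [Letter.b]) 1 + wordSum (n + 1) (jW ·) := by
  ext w
  simp only [Finsupp.add_apply, single_apply, wordSum_apply, ccoef_succ]
  split_ifs <;> subst_vars <;> simp_all [add_comm]

end

/-- For `r ≥ 2`: `⧈(a b^{r-1}) = Σ_{w ∈ W_r} c(w) · w`, the sum being over all
words of length `r`. -/
theorem statement8 (r : ℕ) (hr : 2 ≤ r) :
    box (Letter.a :: List.replicate (r - 1) Letter.b) =
      ((wordsOfLength r).map fun w => Finsupp.single w ((ccoef r w : ℚ))).sum := by
  obtain ⟨n, rfl⟩ : ∃ n, r = n + 1 := ⟨r - 1, by omega⟩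
  change _ = wordSum (n + 1) (ccoef (n + 1) ·)
  rw [Nat.add_sub_cancel, box_cons_replicate, sum_antidiagonal_shW_cons_replicate,
    wordSum_ccoef_succ]
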